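/- Let Y₅ = (1/r)(x,σ₁×σ₂), Y₆ = (1/r)(x,σ₁), Y₇ = (1/r)(x,σ₂−σ₁). Then the following commutation relations hold: [Y₆, Y₅] = 2i(K − 1 + (Y₅)²/2) and [Y₇, Y₅] = −4i(K − 1 + (Y₅)²/2), where 1 denotes the identity operator. -/

import Mathlib

noncomputable section

open scoped BigOperators

/-- The spinor space `ℂ⁴ = ℂ² ⊗ ℂ²`, realized as functions on `Fin 2 × Fin 2`. -/
abbrev Spinor : Type := Fin 2 × Fin 2 → ℂ

/-- Wave functions on `ℝ³` (in the statements they are restricted to functions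
that are smooth away from the origin). -/
abbrev WaveFn : Type := (Fin 3 → ℝ) → Spinor

/-- Operators: `ℂ`-linear combinations and compositions are formed pointwise. -/
abbrev Op : Type := WaveFn → WaveFn

/-- The commutator `[A,B] = AB − BA`. -/
def opComm (A B : Op) : Op := fun ψ => A (B ψ) - B (A ψ)

/-- The identity operator. -/
def idOp : Op := fun ψ => ψ

/-- The Euclidean norm `r = |x|`. -/
def rfun (x : Fin 3 → ℝ) : ℝ := Real.sqrt (∑ k, x k ^ 2)

/-- Multiplication by a radial function `f(r)`. -/
def mulR (f : ℝ → ℝ) : Op := fun ψ x => (f (rfun x) : ℂ) • ψ x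

/-- The position operator `x_k` (multiplication by the k-th coordinate). -/
def xOp (k : Fin 3) : Op := fun ψ x => (x k : ℂ) • ψ x

/-- The momentum operator `p_k = -ihbar ∂/∂x_k`. -/
def pOp (hbar : ℝ) (k : Fin 3) : Op :=
  fun ψ x => (-(Complex.I * (hbar : ℂ))) • fderiv ℝ ψ x (Pi.single k 1)

/-- The Laplacian `Δ = Σ_k ∂²/∂x_k²`. -/
def lap : Op :=
  fun ψ x => ∑ k, fderiv ℝ (fun y => fderiv ℝ ψ y (Pi.single k 1)) x (Pi.single k 1)

/-- The totally antisymmetric Levi-Civita symbol `ε_{ijk}` on `Fin 3`. -/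
def eps (i j k : Fin 3) : ℂ :=
  ((j.1 : ℂ) - (i.1 : ℂ)) * ((k.1 : ℂ) - (i.1 : ℂ)) * ((k.1 : ℂ) - (j.1 : ℂ)) / 2

/-- The standard Pauli matrices `σ¹, σ², σ³`. -/
def pauli : Fin 3 → Matrix (Fin 2) (Fin 2) ℂ :=
  ![!![0, 1; 1, 0], !![0, -Complex.I; Complex.I, 0], !![1, 0; 0, -1]]

/-- `(σ₁)_k = σ^k ⊗ I₂`, acting on the first tensor factor. -/
def sigma1 (k : Fin 3) : Op := fun ψ x ab => ∑ j, pauli k ab.1 j * ψ x (j, ab.2)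

/-- `(σ₂)_k = I₂ ⊗ σ^k`, acting on the second tensor factor. -/
def sigma2 (k : Fin 3) : Op := fun ψ x ab => ∑ j, pauli k ab.2 j * ψ x (ab.1, j)

/-- Dot product of triples of operators: `(A,B) = Σ_k A_k B_k`. -/
def dot (A B : Fin 3 → Op) : Op := ∑ k, A k ∘ B k

/-- Cross product of triples of operators: `(A×B)_k = ε_{klm} A_l B_m`. -/
def cross (A B : Fin 3 → Op) (k : Fin 3) : Op := ∑ l, ∑ m, eps k l m • (A l ∘ B m)

/-- The angular momentum `L_k = ε_{klm} x_l p_m`. -/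
def LOp (hbar : ℝ) (k : Fin 3) : Op := ∑ l, ∑ m, eps k l m • (xOp l ∘ pOp hbar m)

/-- The spin-exchange operator `K = (σ₁,σ₂)`. -/
def KOp : Op := dot sigma1 sigma2

/-- `σ₁ + σ₂` componentwise. -/
def sigmaSum (k : Fin 3) : Op := sigma1 k + sigma2 k

/-- `σ₁ − σ₂` componentwise. -/
def sigmaDiff (k : Fin 3) : Op := sigma1 k - sigma2 k

/-- The general rotationally invariant two-spin Hamiltonian
`H = −(hbar²/2)Δ + V₀(r) + ½V₁(r)(σ₁+σ₂,L) + V₂(r)K + V₃(r)(x,σ₁)(x,σ₂)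
    + V₄(r)(σ₁,p)(σ₂,p) + ½V₅(r)[(σ₁,L)(σ₂,L)+(σ₂,L)(σ₁,L)]`. -/
def Ham (hbar : ℝ) (V₀ V₁ V₂ V₃ V₄ V₅ : ℝ → ℝ) : Op :=
  (-(hbar ^ 2 / 2) : ℂ) • lap + mulR V₀
    + ((1 : ℂ)/2) • (mulR V₁ ∘ dot sigmaSum (LOp hbar))
    + mulR V₂ ∘ KOp
    + mulR V₃ ∘ (dot xOp sigma1 ∘ dot xOp sigma2)
    + mulR V₄ ∘ (dot sigma1 (pOp hbar) ∘ dot sigma2 (pOp hbar))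
    + ((1 : ℂ)/2) • (mulR V₅ ∘ (dot sigma1 (LOp hbar) ∘ dot sigma2 (LOp hbar)
        + dot sigma2 (LOp hbar) ∘ dot sigma1 (LOp hbar)))


/-- `Y₅ = (1/r)(x,σ₁×σ₂)`. -/
def Y5 : Op := mulR (fun r => 1 / r) ∘ dot xOp (cross sigma1 sigma2)

/-- `Y₆ = (1/r)(x,σ₁)`. -/
def Y6 : Op := mulR (fun r => 1 / r) ∘ dot xOp sigma1

/-- `Y₇ = (1/r)(x,σ₂−σ₁)`. -/
def Y7 : Op := mulR (fun r => 1 / r) ∘ dot xOp (fun k => sigma2 k - sigma1 k)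

/-!
None of the operators involved differentiates: at each point `x` they act on `ψ x` as
`4 × 4` matrices, namely `Y₆ = n·σ₁`, `Y₇ = n·(σ₂ - σ₁)`, `Y₅ = n·(σ₁ × σ₂)` with `n = x / r`.
The commutation relations therefore reduce to identities between such matrices. For an
arbitrary vector `v` one has `[v·σ₁, v·(σ₁ × σ₂)] = 2i ((v·v) (K - 1) + (v·(σ₁ × σ₂))² / 2)`
and `[v·σ₂, v·(σ₁ × σ₂)] = -[v·σ₁, v·(σ₁ × σ₂)]`, which are checked entrywise; away from the
origin `n` is a unit vector and both relations follow.
-/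

open Matrix Complex
open scoped Kronecker

abbrev SpinMatrix : Type := Matrix (Fin 2 × Fin 2) (Fin 2 × Fin 2) ℂ

def spin₁ (k : Fin 3) : SpinMatrix := pauli k ⊗ₖ 1

def spin₂ (k : Fin 3) : SpinMatrix := 1 ⊗ₖ pauli k

def spinExchange : SpinMatrix := ∑ k, spin₁ k * spin₂ k

def spinCross (k : Fin 3) : SpinMatrix := ∑ l, ∑ m, eps k l m • (spin₁ l * spin₂ m)

def dotSpin (v : Fin 3 → ℂ) (S : Fin 3 → SpinMatrix) : SpinMatrix := ∑ k, v k • S k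

lemma dotSpin_sub (v : Fin 3 → ℂ) (S T : Fin 3 → SpinMatrix) :
    dotSpin v (S - T) = dotSpin v S - dotSpin v T := by
  simp [dotSpin, smul_sub, Finset.sum_sub_distrib]

lemma smul_dotSpin (c : ℂ) (v : Fin 3 → ℂ) (S : Fin 3 → SpinMatrix) :
    c • dotSpin v S = dotSpin (c • v) S := by
  simp [dotSpin, Finset.smul_sum, smul_smul]

lemma spin₁_apply (k : Fin 3) (a b c d : Fin 2) :
    spin₁ k (a, b) (c, d) = pauli k a c * if b = d then 1 else 0 := by
  simp [spin₁, Matrix.one_apply]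

lemma spin₂_apply (k : Fin 3) (a b c d : Fin 2) :
    spin₂ k (a, b) (c, d) = (if a = c then 1 else 0) * pauli k b d := by
  simp [spin₂, Matrix.one_apply]

lemma spinCross_eq : spinCross = ![spin₁ 1 * spin₂ 2 - spin₁ 2 * spin₂ 1,
    spin₁ 2 * spin₂ 0 - spin₁ 0 * spin₂ 2, spin₁ 0 * spin₂ 1 - spin₁ 1 * spin₂ 0] := by
  funext k
  fin_cases k <;> simp [spinCross, eps, Fin.sum_univ_three] <;> norm_num <;> abel

set_option maxHeartbeats 1000000 in
theorem commutator_dotSpin_spin₁_spinCross (v : Fin 3 → ℂ) :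
    dotSpin v spin₁ * dotSpin v spinCross - dotSpin v spinCross * dotSpin v spin₁
      = (2 * I) • ((∑ k, v k ^ 2) • (spinExchange - 1) + (1 / 2 : ℂ) • dotSpin v spinCross ^ 2) := by
  simp only [dotSpin, spinCross_eq, spinExchange, Fin.sum_univ_three, sq]
  ext ⟨a, b⟩ ⟨c, d⟩
  fin_cases a <;> fin_cases b <;> fin_cases c <;> fin_cases d <;>
  · simp [Matrix.mul_apply, Fintype.sum_prod_type, spin₁_apply, spin₂_apply, pauli]
    have := I_sq
    grind

set_option maxHeartbeats 1000000 in
theorem commutator_dotSpin_spin₂_spinCross (v : Fin 3 → ℂ) :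
    dotSpin v spin₂ * dotSpin v spinCross - dotSpin v spinCross * dotSpin v spin₂
      = -(dotSpin v spin₁ * dotSpin v spinCross - dotSpin v spinCross * dotSpin v spin₁) := by
  simp only [dotSpin, spinCross_eq, Fin.sum_univ_three]
  ext ⟨a, b⟩ ⟨c, d⟩
  fin_cases a <;> fin_cases b <;> fin_cases c <;> fin_cases d <;>
  · simp [Matrix.mul_apply, Fintype.sum_prod_type, spin₁_apply, spin₂_apply, pauli]
    have := I_sq
    grind

def matOp (M : (Fin 3 → ℝ) → SpinMatrix) : Op := fun ψ x => M x *ᵥ ψ x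

lemma matOp_comp (M N : (Fin 3 → ℝ) → SpinMatrix) : matOp M ∘ matOp N = matOp (M * N) := by
  funext ψ x
  simp [matOp, Matrix.mulVec_mulVec]

lemma matOp_add (M N : (Fin 3 → ℝ) → SpinMatrix) : matOp M + matOp N = matOp (M + N) := by
  funext ψ x
  simp [matOp, Matrix.add_mulVec]

lemma matOp_sub (M N : (Fin 3 → ℝ) → SpinMatrix) : matOp M - matOp N = matOp (M - N) := by
  funext ψ x
  simp [matOp, Matrix.sub_mulVec]

lemma matOp_smul (c : ℂ) (M : (Fin 3 → ℝ) → SpinMatrix) : c • matOp M = matOp (c • M) := by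
  funext ψ x
  simp [matOp, Matrix.smul_mulVec]

lemma matOp_sum {ι : Type*} (s : Finset ι) (M : ι → (Fin 3 → ℝ) → SpinMatrix) :
    ∑ i ∈ s, matOp (M i) = matOp (∑ i ∈ s, M i) := by
  funext ψ x
  simp [matOp, Finset.sum_apply, Matrix.sum_mulVec]

lemma opComm_matOp (M N : (Fin 3 → ℝ) → SpinMatrix) :
    opComm (matOp M) (matOp N) = matOp (M * N - N * M) := by
  funext ψ x
  simp [opComm, matOp, Matrix.sub_mulVec, Matrix.mulVec_mulVec]

lemma idOp_eq_matOp : idOp = matOp 1 := by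
  funext ψ x
  simp [idOp, matOp]

lemma matOp_smul_one (f : (Fin 3 → ℝ) → ℂ) : matOp (fun x => f x • 1) = fun ψ x => f x • ψ x := by
  funext ψ x
  simp [matOp, Matrix.smul_mulVec]

lemma sigma1_eq_matOp : sigma1 = fun k => matOp fun _ => spin₁ k := by
  funext k ψ x
  ext ⟨a, b⟩
  simp [sigma1, matOp, mulVec, dotProduct, Fintype.sum_prod_type, spin₁_apply]

lemma sigma2_eq_matOp : sigma2 = fun k => matOp fun _ => spin₂ k := by
  funext k ψ x
  ext ⟨a, b⟩
  simp [sigma2, matOp, mulVec, dotProduct, Fintype.sum_prod_type, spin₂_apply]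

lemma xOp_eq_matOp (k : Fin 3) : xOp k = matOp fun x => (x k : ℂ) • 1 := by
  rw [matOp_smul_one]; rfl

lemma mulR_eq_matOp (f : ℝ → ℝ) : mulR f = matOp fun x => (f (rfun x) : ℂ) • 1 := by
  rw [matOp_smul_one]; rfl

lemma dot_xOp_const (S : Fin 3 → SpinMatrix) :
    dot xOp (fun k => matOp fun _ => S k) = matOp fun x => dotSpin (fun k => x k) S := by
  simp only [dot, xOp_eq_matOp, matOp_comp, matOp_sum]
  congr 1
  funext x
  simp [dotSpin, Finset.sum_apply]

lemma cross_sigma1_sigma2 : cross sigma1 sigma2 = fun k => matOp fun _ => spinCross k := by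
  funext k
  simp only [cross, sigma1_eq_matOp, sigma2_eq_matOp, matOp_comp, matOp_smul, matOp_sum]
  rfl

def unitVec (x : Fin 3 → ℝ) : Fin 3 → ℂ := fun k => ((x k / rfun x : ℝ) : ℂ)

lemma mulR_inv_comp_dot_xOp (S : Fin 3 → SpinMatrix) :
    mulR (fun r => 1 / r) ∘ dot xOp (fun k => matOp fun _ => S k)
      = matOp fun x => dotSpin (unitVec x) S := by
  rw [dot_xOp_const, mulR_eq_matOp, matOp_comp]
  congr 1
  funext x
  rw [Pi.mul_apply, smul_one_mul, smul_dotSpin]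
  congr 2
  funext k
  simp [unitVec, div_eq_inv_mul]

lemma Y5_eq_matOp : Y5 = matOp fun x => dotSpin (unitVec x) spinCross := by
  rw [Y5, cross_sigma1_sigma2, mulR_inv_comp_dot_xOp]

lemma Y6_eq_matOp : Y6 = matOp fun x => dotSpin (unitVec x) spin₁ := by
  simp only [Y6, sigma1_eq_matOp, mulR_inv_comp_dot_xOp]

lemma Y7_eq_matOp : Y7 = matOp fun x => dotSpin (unitVec x) (spin₂ - spin₁) := by
  simp only [Y7, sigma1_eq_matOp, sigma2_eq_matOp, matOp_sub]
  exact mulR_inv_comp_dot_xOp (spin₂ - spin₁)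

lemma KOp_eq_matOp : KOp = matOp fun _ => spinExchange := by
  simp only [KOp, dot, sigma1_eq_matOp, sigma2_eq_matOp, matOp_comp, matOp_sum]
  rfl

lemma sum_sq_unitVec {x : Fin 3 → ℝ} (hx : x ≠ 0) : ∑ k, unitVec x k ^ 2 = 1 := by
  have hpos : 0 < ∑ k, x k ^ 2 := by
    obtain ⟨k, hk⟩ := Function.ne_iff.mp hx
    have : 0 < x k ^ 2 := sq_pos_of_ne_zero hk
    exact this.trans_le (Finset.single_le_sum (fun i _ => sq_nonneg (x i)) (Finset.mem_univ k))
  have hr : rfun x ^ 2 = ∑ k, x k ^ 2 := Real.sq_sqrt hpos.le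
  have hreal : ∑ k, (x k / rfun x) ^ 2 = 1 := by
    simp_rw [div_pow, ← Finset.sum_div, ← hr]
    exact div_self (hr ▸ hpos.ne')
  simp only [unitVec]
  exact_mod_cast hreal

theorem statement15_general
    (ψ : WaveFn)
    (x : Fin 3 → ℝ) (hx : x ≠ 0) :
    opComm Y6 Y5 ψ x
      = ((2 * Complex.I) • (KOp - idOp + ((1 : ℂ)/2) • (Y5 ∘ Y5))) ψ x
    ∧ opComm Y7 Y5 ψ x
      = ((-(4 * Complex.I)) • (KOp - idOp + ((1 : ℂ)/2) • (Y5 ∘ Y5))) ψ x := by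
  have hspin₁ : dotSpin (unitVec x) spin₁ * dotSpin (unitVec x) spinCross
      - dotSpin (unitVec x) spinCross * dotSpin (unitVec x) spin₁
      = (2 * I) • (spinExchange - 1 + (1 / 2 : ℂ) • dotSpin (unitVec x) spinCross ^ 2) := by
    rw [commutator_dotSpin_spin₁_spinCross, sum_sq_unitVec hx, one_smul]
  simp only [Y5_eq_matOp, Y6_eq_matOp, Y7_eq_matOp, KOp_eq_matOp, idOp_eq_matOp, opComm_matOp,
    matOp_comp, matOp_sub, matOp_add, matOp_smul]
  refine ⟨congrArg (· *ᵥ ψ x) ?_, congrArg (· *ᵥ ψ x) ?_⟩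
  · simpa [sq] using hspin₁
  · simp only [Pi.smul_apply, Pi.add_apply, Pi.sub_apply, Pi.mul_apply, Pi.one_apply]
    rw [dotSpin_sub, sub_mul, mul_sub, sub_sub_sub_comm, commutator_dotSpin_spin₂_spinCross,
      hspin₁, ← sq]
    module

/-- `[Y₆,Y₅] = 2i(K − 1 + Y₅²/2)` and `[Y₇,Y₅] = −4i(K − 1 + Y₅²/2)`. -/
theorem statement15
    (ψ : WaveFn) (hψ : ContDiffOn ℝ (⊤ : ℕ∞) ψ {x : Fin 3 → ℝ | x ≠ 0})
    (x : Fin 3 → ℝ) (hx : x ≠ 0) :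
    opComm Y6 Y5 ψ x
      = ((2 * Complex.I) • (KOp - idOp + ((1 : ℂ)/2) • (Y5 ∘ Y5))) ψ x
    ∧ opComm Y7 Y5 ψ x
      = ((-(4 * Complex.I)) • (KOp - idOp + ((1 : ℂ)/2) • (Y5 ∘ Y5))) ψ x :=
  statement15_general ψ x hx
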